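/- Let ᵖΔ be the cone of (numerical classes of) perverse coherent sheaves supported in dimension at most 1, whose elements are written as triples (γ,δ,n) ∈ N₁(X) ⊕ N₁(Y/X) ⊕ ℤ via a splitting of f_*: N₁(Y) → N₁(X). Call L ⊆ ᵖΔ Laurent if (i) for every γ there is n(γ,L) with n ≥ n(γ,L) whenever (γ,δ,n) ∈ L, and (ii) for every γ,n there is δ(γ,n,L) in the cone ℰ of effective f-contracted curve classes with δ ≤ δ(γ,n,L) whenever (γ,δ,n) ∈ L (where δ ≤ δ' means δ' − δ ∈ ℰ). Then: (1) if L₁ and L₂ are Laurent, so is L₁ + L₂; and (2) for every α ∈ ᵖΔ and Laurent L₁, L₂, there are only finitely many decompositions α = α₁ + α₂ with α₁ ∈ L₁ and α₂ ∈ L₂. -/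
import Mathlib


/-!
Statement 15 (Lemma 3.11 of "Donaldson–Thomas invariants and flops").

We abstract the numerical data of Situation 1: `N1X = N₁(X)`, `N1YX = N₁(Y/X) =
ker(f_* : N₁(Y) → N₁(X))` (so that via a splitting `N_{≤1}(Y) ≅ N₁(X) ⊕ N₁(Y/X) ⊕ ℤ`),
the effective cones, the finite-decomposition property of effective classes
(Kollár, Cor. 1.19), and the cone `ᵖΔ` of classes of perverse coherent sheaves
supported in dimension at most one.
-/

/-- The numerical curve-class data attached to the birational contraction
`f : Y → X` of Situation 1, together with the cone `ᵖΔ` of numerical classes of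
perverse coherent sheaves supported in dimension `≤ 1`, written as triples
`(γ, δ, n) ∈ N₁(X) ⊕ N₁(Y/X) ⊕ ℤ` via a splitting of `f_* : N₁(Y) → N₁(X)`. -/
structure ClassData where
  /-- `N₁(X)`: curve classes on `X` modulo numerical equivalence. -/
  N1X : Type
  [instN1X : AddCommGroup N1X]
  /-- `N₁(Y/X) = ker (f_* : N₁(Y) → N₁(X))`. -/
  N1YX : Type
  [instN1YX : AddCommGroup N1YX]
  /-- The cone of effective classes in `N₁(X)`. -/
  effX : AddSubmonoid N1X
  /-- `ℰ ⊂ N₁(Y/X)`: the cone of effective curve classes contracted by `f`. -/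
  eff : AddSubmonoid N1YX
  /-- Kollár: an effective class on `X` admits only finitely many decompositions
  as a sum of two effective classes. -/
  finiteDecompX : ∀ g ∈ effX,
    {q : N1X × N1X | q.1 ∈ effX ∧ q.2 ∈ effX ∧ q.1 + q.2 = g}.Finite
  /-- Kollár: an effective contracted class admits only finitely many
  decompositions as a sum of two effective contracted classes. -/
  finiteDecomp : ∀ d ∈ eff,
    {q : N1YX × N1YX | q.1 ∈ eff ∧ q.2 ∈ eff ∧ q.1 + q.2 = d}.Finite
  /-- `ᵖΔ`: the cone of numerical classes of perverse coherent sheaves supported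
  in dimension at most one, inside `N₁(X) ⊕ N₁(Y/X) ⊕ ℤ`. -/
  Delta : AddSubmonoid (N1X × N1YX × ℤ)
  /-- The `N₁(X)`-component of the class of a perverse coherent sheaf supported in
  dimension `≤ 1` is effective. -/
  Delta_eff : ∀ a ∈ Delta, a.1 ∈ effX

attribute [instance] ClassData.instN1X ClassData.instN1YX

namespace ClassData

variable (c : ClassData)

/-- The effective order on `N₁(Y/X)`: `δ ≤ δ'` iff `δ' − δ ∈ ℰ`. -/
def le (d d' : c.N1YX) : Prop := d' - d ∈ c.eff

/-- A subset `L ⊆ ᵖΔ` is *Laurent* if (i) for every `γ` the integers `n` occurring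
in `L` over `γ` are bounded below, and (ii) for every `γ, n` the classes `δ`
occurring in `L` over `(γ, n)` are bounded above (in the effective order) by an
effective contracted class. -/
def IsLaurent (L : Set (c.N1X × c.N1YX × ℤ)) : Prop :=
  (L ⊆ c.Delta) ∧
  (∀ γ : c.N1X, ∃ n0 : ℤ, ∀ (δ : c.N1YX) (n : ℤ), (γ, δ, n) ∈ L → n0 ≤ n) ∧
  (∀ (γ : c.N1X) (n : ℤ), ∃ δ0 ∈ c.eff, ∀ δ : c.N1YX, (γ, δ, n) ∈ L → c.le δ δ0)

end ClassData

/-- If decompositions of elements *of* a submonoid into two submonoid elements are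
finite, then this holds for arbitrary elements (the set being empty otherwise). -/
private lemma finDecompAll {A : Type} [AddCommGroup A] (M : AddSubmonoid A)
    (h : ∀ g ∈ M, {q : A × A | q.1 ∈ M ∧ q.2 ∈ M ∧ q.1 + q.2 = g}.Finite) (g : A) :
    {q : A × A | q.1 ∈ M ∧ q.2 ∈ M ∧ q.1 + q.2 = g}.Finite := by
  by_cases hg : g ∈ M
  · exact h g hg
  · have : {q : A × A | q.1 ∈ M ∧ q.2 ∈ M ∧ q.1 + q.2 = g} = ∅ := by
      ext q
      simp only [Set.mem_setOf_eq, Set.mem_empty_iff_false, iff_false]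
      rintro ⟨h1, h2, h3⟩
      exact hg (h3 ▸ M.add_mem h1 h2)
    rw [this]; exact Set.finite_empty

/-- Lemma 3.11. If `L₁`, `L₂` are Laurent subsets of `ᵖΔ`, then
(1) the sumset `L₁ + L₂` is Laurent, and (2) every `α ∈ ᵖΔ` admits only finitely
many decompositions `α = α₁ + α₂` with `α₁ ∈ L₁` and `α₂ ∈ L₂`. -/
theorem statement15 (c : ClassData) (L₁ L₂ : Set (c.N1X × c.N1YX × ℤ))
    (h₁ : c.IsLaurent L₁) (h₂ : c.IsLaurent L₂) :
    c.IsLaurent {a | ∃ a₁ ∈ L₁, ∃ a₂ ∈ L₂, a₁ + a₂ = a} ∧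
    ∀ a ∈ c.Delta,
      {q : (c.N1X × c.N1YX × ℤ) × (c.N1X × c.N1YX × ℤ) |
        q.1 ∈ L₁ ∧ q.2 ∈ L₂ ∧ q.1 + q.2 = a}.Finite := by
  classical
  obtain ⟨hL₁Δ, hn₁, hδ₁⟩ := h₁
  obtain ⟨hL₂Δ, hn₂, hδ₂⟩ := h₂
  choose n0₁ hn0₁ using hn₁
  choose n0₂ hn0₂ using hn₂
  choose δ0₁ hδ0₁e hδ0₁ using hδ₁
  choose δ0₂ hδ0₂e hδ0₂ using hδ₂
  have hS : ∀ γ : c.N1X,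
      {q : c.N1X × c.N1X | q.1 ∈ c.effX ∧ q.2 ∈ c.effX ∧ q.1 + q.2 = γ}.Finite :=
    finDecompAll c.effX c.finiteDecompX
  have hE : ∀ d : c.N1YX,
      {q : c.N1YX × c.N1YX | q.1 ∈ c.eff ∧ q.2 ∈ c.eff ∧ q.1 + q.2 = d}.Finite :=
    finDecompAll c.eff c.finiteDecomp
  have heff₁ : ∀ a ∈ L₁, a.1 ∈ c.effX := fun a ha => c.Delta_eff a (hL₁Δ ha)
  have heff₂ : ∀ a ∈ L₂, a.1 ∈ c.effX := fun a ha => c.Delta_eff a (hL₂Δ ha)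
  have hQ : ∀ (γ : c.N1X) (n : ℤ),
      {p : (c.N1X × ℤ) × (c.N1X × ℤ) | p.1.1 ∈ c.effX ∧ p.2.1 ∈ c.effX ∧
        p.1.1 + p.2.1 = γ ∧ p.1.2 + p.2.2 = n ∧
        n0₁ p.1.1 ≤ p.1.2 ∧ n0₂ p.2.1 ≤ p.2.2}.Finite := by
    intro γ n
    apply Set.Finite.subset (Set.Finite.biUnion (hS γ) (fun q _ =>
      ((Set.finite_Icc (n0₁ q.1) (n - n0₂ q.2)).image
        fun m => ((q.1, m), (q.2, n - m)))))
    rintro ⟨⟨γ₁, m₁⟩, ⟨γ₂, m₂⟩⟩ ⟨he1, he2, hg, hnn, hb1, hb2⟩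
    refine Set.mem_biUnion (show (γ₁, γ₂) ∈ _ from ⟨he1, he2, hg⟩) ?_
    refine ⟨m₁, ⟨hb1, by dsimp at hnn hb2 ⊢; omega⟩, ?_⟩
    dsimp at hnn ⊢
    have h : n - m₁ = m₂ := by omega
    rw [h]
  refine ⟨⟨?_, ?_, ?_⟩, ?_⟩
  · rintro a ⟨a₁, h1, a₂, h2, rfl⟩
    exact c.Delta.add_mem (hL₁Δ h1) (hL₂Δ h2)
  · intro γ
    have hT := (hS γ).image (fun q => n0₁ q.1 + n0₂ q.2)
    obtain ⟨n0, hn0⟩ := hT.bddBelow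
    refine ⟨n0, ?_⟩
    rintro δ n ⟨⟨γ₁, δ₁, n₁⟩, h1, ⟨γ₂, δ₂, n₂⟩, h2, hsum⟩
    simp only [Prod.mk_add_mk, Prod.mk.injEq] at hsum
    obtain ⟨hg, hd, hnn⟩ := hsum
    have hmem : n0₁ γ₁ + n0₂ γ₂ ∈ (fun q : c.N1X × c.N1X => n0₁ q.1 + n0₂ q.2) ''
        {q | q.1 ∈ c.effX ∧ q.2 ∈ c.effX ∧ q.1 + q.2 = γ} :=
      ⟨(γ₁, γ₂), ⟨heff₁ _ h1, heff₂ _ h2, hg⟩, rfl⟩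
    have h1' := hn0₁ γ₁ δ₁ n₁ h1
    have h2' := hn0₂ γ₂ δ₂ n₂ h2
    have := hn0 hmem
    omega
  · intro γ n
    refine ⟨∑ p ∈ (hQ γ n).toFinset, (δ0₁ p.1.1 p.1.2 + δ0₂ p.2.1 p.2.2), ?_, ?_⟩
    · exact c.eff.sum_mem fun p _ => c.eff.add_mem (hδ0₁e _ _) (hδ0₂e _ _)
    · rintro δ ⟨⟨γ₁, δ₁, n₁⟩, h1, ⟨γ₂, δ₂, n₂⟩, h2, hsum⟩
      simp only [Prod.mk_add_mk, Prod.mk.injEq] at hsum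
      obtain ⟨hg, hd, hnn⟩ := hsum
      have hp : ((γ₁, n₁), (γ₂, n₂)) ∈ (hQ γ n).toFinset := by
        rw [Set.Finite.mem_toFinset]
        exact ⟨heff₁ _ h1, heff₂ _ h2, hg, hnn, hn0₁ _ _ _ h1, hn0₂ _ _ _ h2⟩
      show _ - _ ∈ c.eff
      rw [← Finset.add_sum_erase _ _ hp]
      have key : (δ0₁ γ₁ n₁ + δ0₂ γ₂ n₂) +
          (∑ p ∈ ((hQ γ n).toFinset).erase ((γ₁, n₁), (γ₂, n₂)),
            (δ0₁ p.1.1 p.1.2 + δ0₂ p.2.1 p.2.2)) - δ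
          = ((δ0₁ γ₁ n₁ - δ₁) + (δ0₂ γ₂ n₂ - δ₂)) +
          (∑ p ∈ ((hQ γ n).toFinset).erase ((γ₁, n₁), (γ₂, n₂)),
            (δ0₁ p.1.1 p.1.2 + δ0₂ p.2.1 p.2.2)) := by
        rw [← hd]; abel
      rw [key]
      exact c.eff.add_mem
        (c.eff.add_mem (hδ0₁ γ₁ n₁ δ₁ h1) (hδ0₂ γ₂ n₂ δ₂ h2))
        (c.eff.sum_mem fun p _ => c.eff.add_mem (hδ0₁e _ _) (hδ0₂e _ _))
  · rintro ⟨γ, δ, n⟩ ha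
    apply Set.Finite.subset (Set.Finite.biUnion (hQ γ n) (fun p _ =>
      ((hE (δ0₁ p.1.1 p.1.2 + δ0₂ p.2.1 p.2.2 - δ)).image
        (fun e => ((p.1.1, δ0₁ p.1.1 p.1.2 - e.1, p.1.2),
                   (p.2.1, δ0₂ p.2.1 p.2.2 - e.2, p.2.2))))))
    rintro ⟨⟨γ₁, δ₁, n₁⟩, ⟨γ₂, δ₂, n₂⟩⟩ ⟨h1, h2, hsum⟩
    simp only [Prod.mk_add_mk, Prod.mk.injEq] at hsum
    obtain ⟨hg, hd, hnn⟩ := hsum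
    have hp : ((γ₁, n₁), (γ₂, n₂)) ∈ {p : (c.N1X × ℤ) × (c.N1X × ℤ) |
        p.1.1 ∈ c.effX ∧ p.2.1 ∈ c.effX ∧ p.1.1 + p.2.1 = γ ∧ p.1.2 + p.2.2 = n ∧
        n0₁ p.1.1 ≤ p.1.2 ∧ n0₂ p.2.1 ≤ p.2.2} :=
      ⟨heff₁ _ h1, heff₂ _ h2, hg, hnn, hn0₁ _ _ _ h1, hn0₂ _ _ _ h2⟩
    refine Set.mem_biUnion hp ⟨(δ0₁ γ₁ n₁ - δ₁, δ0₂ γ₂ n₂ - δ₂),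
      ⟨hδ0₁ γ₁ n₁ δ₁ h1, hδ0₂ γ₂ n₂ δ₂ h2, by dsimp; rw [← hd]; abel⟩, ?_⟩
    dsimp
    rw [sub_sub_cancel, sub_sub_cancel]
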